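/- arXiv:2007.02729 — 4 statements merged into one kernel-verified Lean document; each statement's English description precedes it below -/
import Mathlib

section
/- Let m ≥ 2 and let G̃₁ ≠ G̃₂ be simple bipartite graphs on [m]⊔[n] with all left degrees equal to d ≥ 3 and with identical right degree sequences. If the number of pairs (i,j) that are an edge in exactly one of the two graphs is at most k, then there is a path of simple switchings of length at most k+2 from G̃₁ to G̃₂ within the set of simple bipartite graphs on [m]⊔[n] with left degrees d and the given right degree sequence. -/
open Finset

/-- A bipartite multigraph on `[n] ⊔ [m]` encoded by its adjacency (multiplicity) matrix. -/
def IsReg (n d : ℕ) (A : Fin n → Fin n → ℕ) : Prop :=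
  (∀ i, ∑ j, A i j = d) ∧ (∀ j, ∑ i, A i j = d)

/-- A multigraph is simple if all multiplicities are at most one. -/
def IsSimpleG {n m : ℕ} (A : Fin n → Fin m → ℕ) : Prop := ∀ i j, A i j ≤ 1

/-- The simple switching `⟨i,i',j,j'⟩`: replace the edges `(i,j)` and `(i',j')` by
`(i,j')` and `(i',j)`. -/
def switchM {n m : ℕ} (A : Fin n → Fin m → ℕ) (i i' : Fin n) (j j' : Fin m) :
    Fin n → Fin m → ℕ :=
  fun a b =>
    if a = i ∧ b = j then A a b - 1
    else if a = i' ∧ b = j' then A a b - 1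
    else if a = i ∧ b = j' then A a b + 1
    else if a = i' ∧ b = j then A a b + 1
    else A a b

/-- Two multigraphs are adjacent if one is obtained from the other by a simple switching
operated on two non-incident edges. -/
def AdjacentM {n : ℕ} (A B : Fin n → Fin n → ℕ) : Prop :=
  ∃ i i' j j', i ≠ i' ∧ j ≠ j' ∧ 0 < A i j ∧ 0 < A i' j' ∧ B = switchM A i i' j j'

/-- `Cat_{n,d}(k)`: `d`-regular bipartite multigraphs with exactly `k` multiplicity-2 edges,
no two of them incident, and no multiplicities `≥ 3`. -/
def InCat (n d k : ℕ) (A : Fin n → Fin n → ℕ) : Prop :=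
  IsReg n d A ∧ (∀ i j, A i j ≤ 2) ∧
    (Finset.univ.filter fun p : Fin n × Fin n => A p.1 p.2 = 2).card = k ∧
    (∀ i j j', A i j = 2 → A i j' = 2 → j = j') ∧
    (∀ i i' j, A i j = 2 → A i' j = 2 → i = i')

/-- The set of multiedges (multiplicity-2 edges) of a multigraph. -/
def MEs {n : ℕ} (A : Fin n → Fin n → ℕ) : Finset (Fin n × Fin n) :=
  Finset.univ.filter fun p => A p.1 p.2 = 2

/-- The data of a simple path starting at a multigraph `A ∈ Cat_{n,d}(k)`: to each
multiedge `e = (i_s, j_s)` of `A` it assigns the auxiliary edge `f e = (i'_s, j'_s)` used by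
the corresponding simple switching `⟨i_s, i'_s, j_s, j'_s⟩`.  The auxiliary left (resp. right)
vertices are pairwise distinct, avoid all multiedge left (resp. right) vertices, and the
switching creates no multiple edges. -/
def SimplePathData {n : ℕ} (A : Fin n → Fin n → ℕ)
    (f : Fin n × Fin n → Fin n × Fin n) : Prop :=
  (∀ e ∈ MEs A, 0 < A (f e).1 (f e).2 ∧ A (f e).1 e.2 = 0 ∧ A e.1 (f e).2 = 0 ∧
    ∀ e' ∈ MEs A, (f e).1 ≠ e'.1 ∧ (f e).2 ≠ e'.2) ∧
  ∀ e ∈ MEs A, ∀ e' ∈ MEs A, e ≠ e' → (f e).1 ≠ (f e').1 ∧ (f e).2 ≠ (f e').2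

/-- The endpoint of the simple path with data `f` starting at `A`: each multiedge
`(i_s,j_s)` loses one parallel edge, the auxiliary edge `(i'_s,j'_s)` is removed, and the
edges `(i_s,j'_s)` and `(i'_s,j_s)` are added. -/
def endpointM {n : ℕ} (A : Fin n → Fin n → ℕ) (f : Fin n × Fin n → Fin n × Fin n) :
    Fin n → Fin n → ℕ :=
  fun a b =>
    A a b + ((MEs A).filter fun e => (a = e.1 ∧ b = (f e).2) ∨ (a = (f e).1 ∧ b = e.2)).card
      - ((MEs A).filter fun e => (a = e.1 ∧ b = e.2) ∨ (a = (f e).1 ∧ b = (f e).2)).card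

/-- The `s`-neighborhood of a multigraph: all endpoints of simple paths starting at it. -/
def SN {n : ℕ} (A : Fin n → Fin n → ℕ) : Set (Fin n → Fin n → ℕ) :=
  {B | ∃ f, SimplePathData A f ∧ B = endpointM A f}

/-- The anti-expansion measure `Z(G)` of a simple graph. -/
def Zae {n : ℕ} (A : Fin n → Fin n → ℕ) : ℕ :=
  (Finset.univ.filter fun p : Fin n × Fin n =>
    0 < A p.1 p.2 ∧ ∃ k, k ≠ p.1 ∧ 0 < A k p.2 ∧
      2 ≤ (Finset.univ.filter fun j => 0 < A p.1 j ∧ 0 < A k j).card).card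

/-!
Induct on the number of cells where `A` and `B` differ; call a cell a surplus cell if `A`
exceeds `B` there. Take a row `a` with the fewest surplus cells, a surplus cell `(a, b)`, a
deficit cell `(a', b)` in the same column and a surplus cell `(a', b')`. By the choice of `a`,
`b'` can be taken so that `(a, b')` is not a surplus cell. If `(a, b')` is not an edge of `A`,
switching `A` at `(a, b), (a', b')` repairs three cells and spoils at most one. Otherwise
`(a, b')` is an edge of both graphs, and switching `B` at `(a, b'), (a', b)` gives a graph `B'`
one switching away from `B` that agrees with `A` on three more cells and disagrees on one.
Either way one switching buys a decrease of at least two differing cells, so `k / 2` switchings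
suffice.
-/

section Surplus

variable {ι κ M : Type*} [Fintype ι] [Fintype κ]
  [AddCommMonoid M] [LinearOrder M] [IsOrderedCancelAddMonoid M]

lemma exists_lt_of_sum_eq_of_lt {f g : ι → M} (h : ∑ i, f i = ∑ i, g i) {x : ι}
    (hx : f x < g x) : ∃ y, g y < f y := by
  by_contra! H
  exact (Finset.sum_lt_sum (fun y _ => H y) ⟨x, mem_univ x, hx⟩).ne h

theorem exists_alternating_corner {A B : ι → κ → M}
    (hrow : ∀ i, ∑ j, A i j = ∑ j, B i j) (hcol : ∀ j, ∑ i, A i j = ∑ i, B i j)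
    (hAB : A ≠ B) :
    ∃ a a' b b', B a b < A a b ∧ A a' b < B a' b ∧ B a' b' < A a' b' ∧ ¬ B a b' < A a b' := by
  classical
  set S : ι → Finset κ := fun i => univ.filter fun j => B i j < A i j with hS
  have hrows : (univ.filter fun i => (S i).Nonempty).Nonempty := by
    obtain ⟨i, j, hij⟩ : ∃ i j, A i j ≠ B i j := by
      by_contra! h
      exact hAB (funext fun i => funext (h i))
    obtain ⟨j', hj'⟩ : ∃ j', B i j' < A i j' := by
      rcases hij.lt_or_gt with h | h
      · exact exists_lt_of_sum_eq_of_lt (hrow i) h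
      · exact ⟨j, h⟩
    exact ⟨i, mem_filter.2 ⟨mem_univ _, j', by simpa [hS] using hj'⟩⟩
  obtain ⟨a, ha, hmin⟩ := exists_min_image _ (fun i => (S i).card) hrows
  obtain ⟨b, hb⟩ := (mem_filter.1 ha).2
  replace hb : B a b < A a b := by simpa [hS] using hb
  obtain ⟨a', ha'⟩ := exists_lt_of_sum_eq_of_lt (hcol b).symm hb
  obtain ⟨b'', hb''⟩ := exists_lt_of_sum_eq_of_lt (hrow a') ha'
  have hnsub : ¬ S a' ⊆ S a := by
    intro hsub
    have hss : S a' ⊂ S a :=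
      (ssubset_iff_of_subset hsub).2 ⟨b, by simpa [hS] using hb, by simpa [hS] using ha'.le⟩
    have := hmin a' (mem_filter.2 ⟨mem_univ _, b'', by simpa [hS] using hb''⟩)
    exact (card_lt_card hss).not_ge this
  obtain ⟨b', hb'a', hb'a⟩ := not_subset.1 hnsub
  exact ⟨a, a', b, b', hb, ha', by simpa [hS] using hb'a', by simpa [hS] using hb'a⟩

end Surplus

section Switch

variable {m n : ℕ} {X Y : Fin m → Fin n → ℕ} {i i' : Fin m} {j j' : Fin n}

lemma IsSimpleG.eq_one_and_eq_zero_of_lt (hX : IsSimpleG X) {a : Fin m} {b : Fin n}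
    (h : Y a b < X a b) : X a b = 1 ∧ Y a b = 0 := by
  have := hX a b
  omega

@[simp]
lemma switchM_apply_left_left : switchM X i i' j j' i j = X i j - 1 := by
  simp [switchM]

lemma switchM_apply_right_right (hi : i ≠ i') : switchM X i i' j j' i' j' = X i' j' - 1 := by
  simp [switchM, hi.symm]

lemma switchM_apply_left_right (hi : i ≠ i') (hj : j ≠ j') :
    switchM X i i' j j' i j' = X i j' + 1 := by
  simp [switchM, hi, hj.symm]

lemma switchM_apply_right_left (hi : i ≠ i') (hj : j ≠ j') :
    switchM X i i' j j' i' j = X i' j + 1 := by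
  simp [switchM, hi.symm, hj]

lemma switchM_apply_of_notMem {a : Fin m} {b : Fin n}
    (h : (a, b) ∉ ({i, i'} ×ˢ {j, j'} : Finset _)) : switchM X i i' j j' a b = X a b := by
  simp only [mem_product, mem_insert, mem_singleton, not_and_or, not_or] at h
  unfold switchM
  split_ifs <;> tauto

lemma switchM_add_indicator (hi : i ≠ i') (hj : j ≠ j') (h : 0 < X i j) (h' : 0 < X i' j')
    (a : Fin m) (b : Fin n) :
    switchM X i i' j j' a b + (if a = i ∧ b = j then 1 else 0) +
        (if a = i' ∧ b = j' then 1 else 0) =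
      X a b + (if a = i ∧ b = j' then 1 else 0) + (if a = i' ∧ b = j then 1 else 0) := by
  unfold switchM
  split_ifs <;> simp_all <;> omega

lemma isSimpleG_switchM (hX : IsSimpleG X) (h : X i j' = 0) (h' : X i' j = 0) :
    IsSimpleG (switchM X i i' j j') := by
  intro a b
  have := hX a b
  unfold switchM
  split_ifs <;> simp_all

lemma switchM_switchM (hi : i ≠ i') (hj : j ≠ j') (h : 0 < X i j) (h' : 0 < X i' j') :
    switchM (switchM X i i' j j') i i' j' j = X := by
  funext a b
  unfold switchM
  split_ifs <;> simp_all <;> omega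

def rowSums (X : Fin m → Fin n → ℕ) (a : Fin m) : ℕ := ∑ b, X a b

def colSums (X : Fin m → Fin n → ℕ) (b : Fin n) : ℕ := ∑ a, X a b

lemma rowSums_switchM (hi : i ≠ i') (hj : j ≠ j') (h : 0 < X i j) (h' : 0 < X i' j') :
    rowSums (switchM X i i' j j') = rowSums X := by
  funext a
  have := sum_congr rfl fun b (_ : b ∈ univ) => switchM_add_indicator hi hj h h' a b
  simp only [ite_and, sum_add_distrib, sum_ite_irrel, sum_ite_eq', mem_univ, ↓reduceIte,
    sum_const_zero] at this
  unfold rowSums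
  omega

lemma colSums_switchM (hi : i ≠ i') (hj : j ≠ j') (h : 0 < X i j) (h' : 0 < X i' j') :
    colSums (switchM X i i' j j') = colSums X := by
  funext b
  have := sum_congr rfl fun a (_ : a ∈ univ) => switchM_add_indicator hi hj h h' a b
  simp only [ite_and, sum_add_distrib, sum_ite_eq', mem_univ, ↓reduceIte] at this
  unfold colSums
  omega

def diffCells (X Y : Fin m → Fin n → ℕ) : Finset (Fin m × Fin n) :=
  univ.filter fun p => X p.1 p.2 ≠ Y p.1 p.2

lemma diffCells_comm (X Y : Fin m → Fin n → ℕ) : diffCells X Y = diffCells Y X := by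
  simp only [diffCells, ne_comm]

lemma card_diffCells_switchM_add_two_le (hi : i ≠ i') (hj : j ≠ j') {c : Fin m × Fin n}
    (hc : c ∈ ({i, i'} ×ˢ {j, j'} : Finset _))
    (hfix : ∀ p ∈ ({i, i'} ×ˢ {j, j'} : Finset _), p ≠ c →
      X p.1 p.2 ≠ Y p.1 p.2 ∧ switchM X i i' j j' p.1 p.2 = Y p.1 p.2) :
    (diffCells (switchM X i i' j j') Y).card + 2 ≤ (diffCells X Y).card := by
  set Q : Finset (Fin m × Fin n) := {i, i'} ×ˢ {j, j'}
  have hQ : Q.card = 4 := by simp [Q, card_product, card_pair hi, card_pair hj]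
  have hsub : diffCells (switchM X i i' j j') Y ⊆ insert c (diffCells X Y \ Q.erase c) := by
    intro p hp
    simp only [diffCells, mem_filter, mem_univ, true_and] at hp
    by_cases hpQ : p ∈ Q
    · by_cases hpc : p = c
      · exact hpc ▸ mem_insert_self _ _
      · exact absurd (hfix p hpQ hpc).2 hp
    · refine mem_insert_of_mem (mem_sdiff.2 ⟨?_, fun h => hpQ (mem_of_mem_erase h)⟩)
      simpa [diffCells, switchM_apply_of_notMem hpQ] using hp
  have hfixed : Q.erase c ⊆ diffCells X Y := fun p hp => by
    simpa [diffCells] using (hfix p (mem_of_mem_erase hp) (ne_of_mem_erase hp)).1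
  have := (card_le_card hsub).trans (card_insert_le _ _)
  rw [card_sdiff_of_subset hfixed, card_erase_of_mem hc, hQ] at this
  have := card_le_card hfixed
  rw [card_erase_of_mem hc, hQ] at this
  omega

end Switch

section Path

variable {m n : ℕ}

def IsSwitchStep (X Y : Fin m → Fin n → ℕ) : Prop :=
  ∃ i i' j j', i ≠ i' ∧ j ≠ j' ∧ 0 < X i j ∧ 0 < X i' j' ∧
    Y = switchM X i i' j j' ∧ IsSimpleG Y

def IsSwitchPath (X Y : Fin m → Fin n → ℕ) (L : ℕ) : Prop :=
  ∃ P : ℕ → Fin m → Fin n → ℕ, P 0 = X ∧ P L = Y ∧ ∀ t < L, IsSwitchStep (P t) (P (t + 1))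

variable {X Y Z : Fin m → Fin n → ℕ} {L : ℕ}

lemma isSwitchStep_switchM {i i' : Fin m} {j j' : Fin n} (hX : IsSimpleG X) (hi : i ≠ i')
    (hj : j ≠ j') (h : 0 < X i j) (h' : 0 < X i' j') (h₀ : X i j' = 0) (h₀' : X i' j = 0) :
    IsSwitchStep X (switchM X i i' j j') :=
  ⟨i, i', j, j', hi, hj, h, h', rfl, isSimpleG_switchM hX h₀ h₀'⟩

lemma IsSwitchStep.isSimpleG (h : IsSwitchStep X Y) : IsSimpleG Y := by
  obtain ⟨_, _, _, _, _, _, _, _, _, hY⟩ := h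
  exact hY

lemma IsSwitchPath.refl (X : Fin m → Fin n → ℕ) : IsSwitchPath X X 0 :=
  ⟨fun _ => X, rfl, rfl, fun _ h => absurd h (Nat.not_lt_zero _)⟩

lemma IsSwitchPath.cons (h : IsSwitchStep X Y) (hp : IsSwitchPath Y Z L) :
    IsSwitchPath X Z (L + 1) := by
  obtain ⟨P, hP0, hPL, hP⟩ := hp
  refine ⟨fun | 0 => X | t + 1 => P t, rfl, hPL, ?_⟩
  rintro (_ | t) ht
  · simpa [hP0] using h
  · exact hP t (by omega)

lemma IsSwitchPath.snoc (hp : IsSwitchPath X Y L) (h : IsSwitchStep Y Z) :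
    IsSwitchPath X Z (L + 1) := by
  obtain ⟨P, hP0, hPL, hP⟩ := hp
  refine ⟨fun t => if t ≤ L then P t else Z, by simp [hP0], by simp, fun t ht => ?_⟩
  rcases (Nat.lt_succ_iff.1 ht).lt_or_eq with ht | rfl
  · simpa [ht.le, Nat.succ_le_of_lt ht] using hP t ht
  · simpa [hPL] using h

end Path

section Main

variable {m n : ℕ} {A B : Fin m → Fin n → ℕ}

theorem exists_switch_decreasing_diffCells (hA : IsSimpleG A) (hB : IsSimpleG B)
    (hrow : rowSums A = rowSums B) (hcol : colSums A = colSums B) (hAB : A ≠ B) :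
    (∃ A', IsSwitchStep A A' ∧ rowSums A' = rowSums B ∧ colSums A' = colSums B ∧
      (diffCells A' B).card + 2 ≤ (diffCells A B).card) ∨
    (∃ B', IsSimpleG B' ∧ IsSwitchStep B' B ∧ rowSums A = rowSums B' ∧ colSums A = colSums B' ∧
      (diffCells A B').card + 2 ≤ (diffCells A B).card) := by
  obtain ⟨a, a', b, b', hab, ha'b, ha'b', hab'⟩ :=
    exists_alternating_corner (congrFun hrow) (congrFun hcol) hAB
  obtain ⟨hAab, hBab⟩ := hA.eq_one_and_eq_zero_of_lt hab
  obtain ⟨hBa'b, hAa'b⟩ := hB.eq_one_and_eq_zero_of_lt ha'b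
  obtain ⟨hAa'b', hBa'b'⟩ := hA.eq_one_and_eq_zero_of_lt ha'b'
  have ha : a ≠ a' := by rintro rfl; omega
  have hb : b ≠ b' := by rintro rfl; omega
  by_cases hAab' : A a b' = 0
  · refine .inl ⟨_, isSwitchStep_switchM hA ha hb (by omega) (by omega) hAab' hAa'b,
      (rowSums_switchM ha hb (by omega) (by omega)).trans hrow,
      (colSums_switchM ha hb (by omega) (by omega)).trans hcol, ?_⟩
    refine card_diffCells_switchM_add_two_le ha hb (c := (a, b')) (by simp) ?_
    simp only [mem_product, mem_insert, mem_singleton]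
    rintro ⟨x, y⟩ ⟨rfl | rfl, rfl | rfl⟩ hc <;>
      simp_all [switchM_apply_right_right, switchM_apply_right_left]
  have hBab' : B a b' = 1 := by have := hA a b'; have := hB a b'; omega
  have hB' := isSimpleG_switchM hB hBab hBa'b'
  have hstep := isSwitchStep_switchM hB' ha hb
    (by simp [switchM_apply_left_right ha hb.symm, hBab])
    (by simp [switchM_apply_right_left ha hb.symm, hBa'b'])
    (by simp [hBab'])
    (by simp [switchM_apply_right_right ha, hBa'b])
  rw [switchM_switchM ha hb.symm (by omega) (by omega)] at hstep
  refine .inr ⟨_, hB', hstep,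
    hrow.trans (rowSums_switchM ha hb.symm (by omega) (by omega)).symm,
    hcol.trans (colSums_switchM ha hb.symm (by omega) (by omega)).symm, ?_⟩
  rw [diffCells_comm, diffCells_comm A]
  refine card_diffCells_switchM_add_two_le ha hb.symm (c := (a, b')) (by simp) ?_
  simp only [mem_product, mem_insert, mem_singleton]
  rintro ⟨x, y⟩ ⟨rfl | rfl, rfl | rfl⟩ hc <;>
    simp_all [switchM_apply_right_right, switchM_apply_left_right, switchM_apply_right_left,
      hb.symm]

theorem exists_isSwitchPath (hA : IsSimpleG A) (hB : IsSimpleG B)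
    (hrow : rowSums A = rowSums B) (hcol : colSums A = colSums B) :
    ∃ L, 2 * L ≤ (diffCells A B).card ∧ IsSwitchPath A B L := by
  induction hN : (diffCells A B).card using Nat.strong_induction_on generalizing A B with
  | _ N ih =>
  by_cases hAB : A = B
  · subst hAB
    exact ⟨0, Nat.zero_le _, .refl A⟩
  rcases exists_switch_decreasing_diffCells hA hB hrow hcol hAB with
    ⟨A', hstep, hrow', hcol', hcard⟩ | ⟨B', hB', hstep, hrow', hcol', hcard⟩
  · obtain ⟨L, hL, hP⟩ := ih _ (by omega) hstep.isSimpleG hB hrow' hcol' rfl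
    exact ⟨L + 1, by omega, hP.cons hstep⟩
  · obtain ⟨L, hL, hP⟩ := ih _ (by omega) hA hB' hrow' hcol' rfl
    exact ⟨L + 1, by omega, hP.snoc hstep⟩

end Main

theorem stmt13_general (m n d k : ℕ)
    (A B : Fin m → Fin n → ℕ)
    (hAs : IsSimpleG A) (hBs : IsSimpleG B)
    (hAl : ∀ i, ∑ j, A i j = d) (hBl : ∀ i, ∑ j, B i j = d)
    (hr : ∀ j, ∑ i, A i j = ∑ i, B i j)
    (hk : (Finset.univ.filter fun p : Fin m × Fin n => A p.1 p.2 ≠ B p.1 p.2).card ≤ k) :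
    ∃ L ≤ k + 2, ∃ P : ℕ → Fin m → Fin n → ℕ,
      P 0 = A ∧ P L = B ∧
      ∀ t < L, ∃ i i' j j', i ≠ i' ∧ j ≠ j' ∧
        0 < P t i j ∧ 0 < P t i' j' ∧
        P (t + 1) = switchM (P t) i i' j j' ∧ IsSimpleG (P (t + 1)) := by
  obtain ⟨L, hL, P, hP0, hPL, hP⟩ :=
    exists_isSwitchPath hAs hBs (funext fun i => (hAl i).trans (hBl i).symm) (funext hr)
  exact ⟨L, by unfold diffCells at hL; omega, P, hP0, hPL, hP⟩

/-- Let `m ≥ 2`, `d ≥ 3`, and let `G̃₁ ≠ G̃₂` be simple bipartite graphs on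
`[m]⊔[n]` with all left degrees `d` and the same right degree sequence, differing in at most
`k` entries.  Then there is a path of at most `k+2` simple switchings from `G̃₁` to `G̃₂`
inside the set of simple bipartite graphs with these degrees. -/
theorem stmt13 (m n d k : ℕ) (hm : 2 ≤ m) (hd : 3 ≤ d)
    (A B : Fin m → Fin n → ℕ) (hne : A ≠ B)
    (hAs : IsSimpleG A) (hBs : IsSimpleG B)
    (hAl : ∀ i, ∑ j, A i j = d) (hBl : ∀ i, ∑ j, B i j = d)
    (hr : ∀ j, ∑ i, A i j = ∑ i, B i j)
    (hk : (Finset.univ.filter fun p : Fin m × Fin n => A p.1 p.2 ≠ B p.1 p.2).card ≤ k) :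
    ∃ L ≤ k + 2, ∃ P : ℕ → Fin m → Fin n → ℕ,
      P 0 = A ∧ P L = B ∧
      ∀ t < L, ∃ i i' j j', i ≠ i' ∧ j ≠ j' ∧
        0 < P t i j ∧ 0 < P t i' j' ∧
        P (t + 1) = switchM (P t) i i' j j' ∧ IsSimpleG (P (t + 1)) :=
  stmt13_general m n d k A B hAs hBs hAl hBl hr hk
end

section
/- For any admissible 4-tuple T = (G₁,G₁',G₂,G₂'), the number of pairs (i,j) with i in the non-standard index set I_NS(T) such that (i,j) is an edge in exactly one of the simple graphs G₁, G₂, is at most 8·|I_NS(T)| + 4·[G₁' and G₂' are adjacent and connected by a type B switching]. -/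
open Finset

/-- The set `I(G_h, G_h')` of left vertices used by the simple switchings of the simple
path with data `f` starting at `A`: the multiedge left vertices together with the auxiliary
left vertices. -/
def IsetS {n : ℕ} (A : Fin n → Fin n → ℕ) (f : Fin n × Fin n → Fin n × Fin n) :
    Set (Fin n) :=
  {i | ∃ e ∈ MEs A, i = e.1 ∨ i = (f e).1}

/-- Validity of a switching datum `s = ((a,b),(a',b'))`, encoding the simple switching
`⟨a,a',b,b'⟩` on a multigraph `A`. -/
def SwOK {n : ℕ} (A : Fin n → Fin n → ℕ)
    (s : (Fin n × Fin n) × (Fin n × Fin n)) : Prop :=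
  s.1.1 ≠ s.2.1 ∧ s.1.2 ≠ s.2.2 ∧ 0 < A s.1.1 s.1.2 ∧ 0 < A s.2.1 s.2.2

/-- Application of a switching datum. -/
def applySw {n : ℕ} (A : Fin n → Fin n → ℕ)
    (s : (Fin n × Fin n) × (Fin n × Fin n)) : Fin n → Fin n → ℕ :=
  switchM A s.1.1 s.2.1 s.1.2 s.2.2

/-- `I(T) = I(G₁,G₁') ∪ I(G₂,G₂')`. -/
def ITot {n : ℕ} (G₁' G₂' : Fin n → Fin n → ℕ)
    (f₁ f₂ : Fin n × Fin n → Fin n × Fin n) : Set (Fin n) :=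
  IsetS G₁' f₁ ∪ IsetS G₂' f₂

/-- An `m`-standard edge `e = (i,j)` with respect to the tuple `T = (G₁,G₁',G₂,G₂')`
with path data `f₁, f₂` and (optional) switching `sw` between `G₁'` and `G₂'`. -/
def MStandard {n : ℕ} (G₁ G₁' G₂ G₂' : Fin n → Fin n → ℕ)
    (f₁ f₂ : Fin n × Fin n → Fin n × Fin n)
    (sw : Option ((Fin n × Fin n) × (Fin n × Fin n)))
    (e : Fin n × Fin n) : Prop :=
  G₁' e.1 e.2 = 2 ∧ G₂' e.1 e.2 = 2 ∧
  (f₁ e).1 ∉ IsetS G₂' f₂ ∧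
  (f₂ e).1 ∉ IsetS G₁' f₁ ∧
  G₁ (f₁ e).1 (f₂ e).2 = 0 ∧ G₂ (f₁ e).1 (f₂ e).2 = 0 ∧
  ∀ s, sw = some s →
    s.1.1 ∉ ({e.1, (f₁ e).1, (f₂ e).1} : Set (Fin n)) ∧
    s.2.1 ∉ ({e.1, (f₁ e).1, (f₂ e).1} : Set (Fin n))

/-- The set `I_ST(T)` of standard left vertices: left vertices of `m`-standard edges and
the associated auxiliary left vertices. -/
def ISTs {n : ℕ} (G₁ G₁' G₂ G₂' : Fin n → Fin n → ℕ)
    (f₁ f₂ : Fin n × Fin n → Fin n × Fin n)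
    (sw : Option ((Fin n × Fin n) × (Fin n × Fin n))) : Set (Fin n) :=
  {i | ∃ e, MStandard G₁ G₁' G₂ G₂' f₁ f₂ sw e ∧
    (i = e.1 ∨ i = (f₁ e).1 ∨ i = (f₂ e).1)}

/-- The switching between `G₁'` and `G₂'` is of type B: it operates on a left vertex of
`I(T)`. -/
def TypeB {n : ℕ} (G₁' G₂' : Fin n → Fin n → ℕ)
    (f₁ f₂ : Fin n × Fin n → Fin n × Fin n)
    (sw : Option ((Fin n × Fin n) × (Fin n × Fin n))) : Prop :=
  ∃ s, sw = some s ∧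
    (s.1.1 ∈ ITot G₁' G₂' f₁ f₂ ∨ s.2.1 ∈ ITot G₁' G₂' f₁ f₂)

/-- The set `Ĩ`: the two left vertices of the switching between `G₁'` and `G₂'` if it is of
type B, and `∅` otherwise. -/
def ItildeS {n : ℕ} (G₁' G₂' : Fin n → Fin n → ℕ)
    (f₁ f₂ : Fin n × Fin n → Fin n × Fin n)
    (sw : Option ((Fin n × Fin n) × (Fin n × Fin n))) : Set (Fin n) :=
  {i | ∃ s, sw = some s ∧
    (s.1.1 ∈ ITot G₁' G₂' f₁ f₂ ∨ s.2.1 ∈ ITot G₁' G₂' f₁ f₂) ∧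
    (i = s.1.1 ∨ i = s.2.1)}

/-- The set `I_NS(T)` of non-standard left vertices:
`I_NS(T) = (I(T) \ I_ST(T)) ∪ Ĩ`. -/
def INS {n : ℕ} (G₁ G₁' G₂ G₂' : Fin n → Fin n → ℕ)
    (f₁ f₂ : Fin n × Fin n → Fin n × Fin n)
    (sw : Option ((Fin n × Fin n) × (Fin n × Fin n))) : Set (Fin n) :=
  (ITot G₁' G₂' f₁ f₂ \ ISTs G₁ G₁' G₂ G₂' f₁ f₂ sw) ∪ ItildeS G₁' G₂' f₁ f₂ sw

open scoped Classical in
private lemma uniqE {n : ℕ} {A : Fin n → Fin n → ℕ} {f : Fin n × Fin n → Fin n × Fin n}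
    (h4 : ∀ i j j', A i j = 2 → A i j' = 2 → j = j')
    (hp : SimplePathData A f) {i : Fin n} {e e' : Fin n × Fin n}
    (he : e ∈ MEs A) (he' : e' ∈ MEs A)
    (h1 : i = e.1 ∨ i = (f e).1) (h2 : i = e'.1 ∨ i = (f e').1) : e = e' := by
  have hA : A e.1 e.2 = 2 := by simpa [MEs] using he
  have hA' : A e'.1 e'.2 = 2 := by simpa [MEs] using he'
  rcases h1 with h1 | h1 <;> rcases h2 with h2 | h2
  · have h11 : e.1 = e'.1 := h1 ▸ h2
    have h22 : e.2 = e'.2 := h4 e.1 e.2 e'.2 hA (h11 ▸ hA')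
    exact Prod.ext h11 h22
  · exact absurd (h2 ▸ h1) ((hp.1 e' he').2.2.2 e he).1
  · exact absurd (h1 ▸ h2) ((hp.1 e he).2.2.2 e' he').1
  · by_contra hne
    exact (hp.2 e he e' he' hne).1 (h1 ▸ h2)

open scoped Classical in
private lemma row2 {n : ℕ} {A : Fin n → Fin n → ℕ} {f : Fin n × Fin n → Fin n × Fin n}
    (h4 : ∀ i j j', A i j = 2 → A i j' = 2 → j = j')
    (hp : SimplePathData A f) (i : Fin n) :
    (Finset.univ.filter fun j => endpointM A f i j ≠ A i j).card ≤ 2 := by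
  have key : ∀ j, endpointM A f i j ≠ A i j →
      ∃ e ∈ MEs A, (i = e.1 ∨ i = (f e).1) ∧ (j = e.2 ∨ j = (f e).2) := by
    intro j hj
    by_contra hc
    push_neg at hc
    have h1 : ((MEs A).filter fun e => (i = e.1 ∧ j = (f e).2) ∨ (i = (f e).1 ∧ j = e.2)).card = 0 := by
      rw [Finset.card_eq_zero, Finset.filter_eq_empty_iff]
      rintro e he (⟨hi, hjj⟩ | ⟨hi, hjj⟩)
      · exact (hc e he (Or.inl hi)).2 hjj
      · exact (hc e he (Or.inr hi)).1 hjj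
    have h2 : ((MEs A).filter fun e => (i = e.1 ∧ j = e.2) ∨ (i = (f e).1 ∧ j = (f e).2)).card = 0 := by
      rw [Finset.card_eq_zero, Finset.filter_eq_empty_iff]
      rintro e he (⟨hi, hjj⟩ | ⟨hi, hjj⟩)
      · exact (hc e he (Or.inl hi)).1 hjj
      · exact (hc e he (Or.inr hi)).2 hjj
    exact hj (by simp [endpointM, h1, h2])
  by_cases h : ∃ e ∈ MEs A, i = e.1 ∨ i = (f e).1
  · obtain ⟨e₀, he₀, hi₀⟩ := h
    have hsub : (Finset.univ.filter fun j => endpointM A f i j ≠ A i j) ⊆ {e₀.2, (f e₀).2} := by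
      intro j hj
      simp only [Finset.mem_filter, Finset.mem_univ, true_and] at hj
      obtain ⟨e, he, hie, hje⟩ := key j hj
      have : e = e₀ := uniqE h4 hp he he₀ hie hi₀
      subst this
      simpa [Finset.mem_insert, Finset.mem_singleton] using hje
    exact (Finset.card_le_card hsub).trans ((Finset.card_insert_le _ _).trans (by simp))
  · have : (Finset.univ.filter fun j => endpointM A f i j ≠ A i j) = ∅ := by
      rw [Finset.filter_eq_empty_iff]
      intro j _ hj
      obtain ⟨e, he, hie, -⟩ := key j hj
      exact h ⟨e, he, hie⟩
    simp [this]

open scoped Classical in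
private lemma rowsw {n : ℕ} (A : Fin n → Fin n → ℕ) (i₀ i₀' : Fin n) (j₀ j₀' : Fin n) (i : Fin n) :
    (Finset.univ.filter fun j => switchM A i₀ i₀' j₀ j₀' i j ≠ A i j).card ≤ 2 := by
  have hsub : (Finset.univ.filter fun j => switchM A i₀ i₀' j₀ j₀' i j ≠ A i j) ⊆ {j₀, j₀'} := by
    intro j hj
    simp only [Finset.mem_filter, Finset.mem_univ, true_and] at hj
    by_contra hc
    simp only [Finset.mem_insert, Finset.mem_singleton, not_or] at hc
    exact hj (by simp [switchM, hc.1, hc.2])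
  exact (Finset.card_le_card hsub).trans ((Finset.card_insert_le _ _).trans (by simp))

open scoped Classical in
/-- For any admissible `4`-tuple `T = (G₁,G₁',G₂,G₂')`, the number of
pairs `(i,j)` with `i ∈ I_NS(T)` such that `(i,j)` is an edge in exactly one of `G₁, G₂`
is at most `8·|I_NS(T)| + 4·[G₁' and G₂' are adjacent and connected by a type B switching]`. -/
theorem stmt14 (n d k₁ k₂ : ℕ)
    (G₁ G₁' G₂ G₂' : Fin n → Fin n → ℕ)
    (f₁ f₂ : Fin n × Fin n → Fin n × Fin n)
    (sw : Option ((Fin n × Fin n) × (Fin n × Fin n)))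
    (hc₁ : InCat n d k₁ G₁') (hc₂ : InCat n d k₂ G₂')
    (hp₁ : SimplePathData G₁' f₁) (he₁ : endpointM G₁' f₁ = G₁)
    (hp₂ : SimplePathData G₂' f₂) (he₂ : endpointM G₂' f₂ = G₂)
    (hsw : match sw with
      | none => G₁' = G₂'
      | some s => SwOK G₁' s ∧ G₂' = applySw G₁' s) :
    ({p : Fin n × Fin n |
        p.1 ∈ INS G₁ G₁' G₂ G₂' f₁ f₂ sw ∧
        ¬ (0 < G₁ p.1 p.2 ↔ 0 < G₂ p.1 p.2)} : Set (Fin n × Fin n)).ncard ≤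
      8 * (INS G₁ G₁' G₂ G₂' f₁ f₂ sw).ncard +
        (if TypeB G₁' G₂' f₁ f₂ sw then 4 else 0) := by
  classical
  set S : Set (Fin n) := INS G₁ G₁' G₂ G₂' f₁ f₂ sw with hS
  have hfin : S.Finite := Set.toFinite S
  set B : Finset (Fin n) := hfin.toFinset with hB
  have hrow : ∀ i : Fin n,
      (Finset.univ.filter fun j => ¬ (0 < G₁ i j ↔ 0 < G₂ i j)).card ≤ 6 := by
    intro i
    have hsub : (Finset.univ.filter fun j => ¬ (0 < G₁ i j ↔ 0 < G₂ i j)) ⊆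
        (Finset.univ.filter fun j => G₁ i j ≠ G₁' i j) ∪
        (Finset.univ.filter fun j => G₁' i j ≠ G₂' i j) ∪
        (Finset.univ.filter fun j => G₂ i j ≠ G₂' i j) := by
      intro j hj
      simp only [Finset.mem_filter, Finset.mem_univ, true_and] at hj
      simp only [Finset.mem_union, Finset.mem_filter, Finset.mem_univ, true_and]
      by_contra hc
      push_neg at hc
      obtain ⟨⟨h1, h2⟩, h3⟩ := hc
      exact hj (by rw [h1, h2, ← h3])
    have c1 : (Finset.univ.filter fun j => G₁ i j ≠ G₁' i j).card ≤ 2 := by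
      have := row2 hc₁.2.2.2.1 hp₁ i
      rw [he₁] at this
      exact this
    have c3 : (Finset.univ.filter fun j => G₂ i j ≠ G₂' i j).card ≤ 2 := by
      have := row2 hc₂.2.2.2.1 hp₂ i
      rw [he₂] at this
      exact this
    have c2 : (Finset.univ.filter fun j => G₁' i j ≠ G₂' i j).card ≤ 2 := by
      match sw, hsw with
      | none, hsw =>
        have : (Finset.univ.filter fun j => G₁' i j ≠ G₂' i j) = ∅ := by
          rw [Finset.filter_eq_empty_iff]; intro j _; rw [hsw]; simp
        simp [this]
      | some s, hsw =>
        have h' : (Finset.univ.filter fun j => G₂' i j ≠ G₁' i j).card ≤ 2 := by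
          rw [hsw.2]
          exact rowsw G₁' s.1.1 s.2.1 s.1.2 s.2.2 i
        calc (Finset.univ.filter fun j => G₁' i j ≠ G₂' i j).card
            = (Finset.univ.filter fun j => G₂' i j ≠ G₁' i j).card := by
              congr 1; apply Finset.filter_congr; intro j _; exact ne_comm
          _ ≤ 2 := h'
    calc (Finset.univ.filter fun j => ¬ (0 < G₁ i j ↔ 0 < G₂ i j)).card
        ≤ _ := Finset.card_le_card hsub
      _ ≤ _ := Finset.card_union_le _ _
      _ ≤ (Finset.univ.filter fun j => G₁ i j ≠ G₁' i j).card +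
            (Finset.univ.filter fun j => G₁' i j ≠ G₂' i j).card +
            (Finset.univ.filter fun j => G₂ i j ≠ G₂' i j).card := by
          gcongr; exact Finset.card_union_le _ _
      _ ≤ 2 + 2 + 2 := by gcongr
      _ = 6 := rfl
  set P : Finset (Fin n × Fin n) := Finset.univ.filter
      (fun p => p.1 ∈ S ∧ ¬ (0 < G₁ p.1 p.2 ↔ 0 < G₂ p.1 p.2)) with hP
  have hset : ({p : Fin n × Fin n |
      p.1 ∈ INS G₁ G₁' G₂ G₂' f₁ f₂ sw ∧
      ¬ (0 < G₁ p.1 p.2 ↔ 0 < G₂ p.1 p.2)} : Set (Fin n × Fin n)) = ↑P := by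
    ext p; simp [hP, hS]
  rw [hset, Set.ncard_coe_finset]
  have hPsub : P ⊆ B.biUnion (fun i =>
      (Finset.univ.filter fun j => ¬ (0 < G₁ i j ↔ 0 < G₂ i j)).image (Prod.mk i)) := by
    intro p hp
    simp only [hP, Finset.mem_filter, Finset.mem_univ, true_and] at hp
    refine Finset.mem_biUnion.2 ⟨p.1, ?_, ?_⟩
    · rw [hB, Set.Finite.mem_toFinset]
      exact hp.1
    · exact Finset.mem_image.2 ⟨p.2, by simp [hp.2], by simp⟩
  have hcard : P.card ≤ 6 * B.card := by
    calc P.card ≤ _ := Finset.card_le_card hPsub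
      _ ≤ ∑ i ∈ B, ((Finset.univ.filter fun j => ¬ (0 < G₁ i j ↔ 0 < G₂ i j)).image (Prod.mk i)).card :=
          Finset.card_biUnion_le
      _ ≤ ∑ i ∈ B, 6 := by
          apply Finset.sum_le_sum
          intro i _
          exact (Finset.card_image_le).trans (hrow i)
      _ = 6 * B.card := by rw [Finset.sum_const, smul_eq_mul, Nat.mul_comm]
  have hncard : S.ncard = B.card := Set.ncard_eq_toFinset_card S hfin
  rw [hS] at hncard
  rw [← hncard] at hcard
  have : 6 * S.ncard ≤ 8 * S.ncard + (if TypeB G₁' G₂' f₁ f₂ sw then 4 else 0) := by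
    have := Nat.mul_le_mul_right S.ncard (by norm_num : 6 ≤ 8)
    omega
  rw [hS] at this ⊢
  exact hcard.trans this
end

section
/- For any function f of zero mean on Ω^B_n(d) satisfying Σ_{G',G'' ∈ R} π_u(G')π_u(G'')(f(G')−f(G''))² < 2^{−7}·Var_{π_u}(f) where R = R_{n,d}(𝔷) has π_u(R) ≥ 1 − 2^{−9}, one has Σ_{G' ∈ R} π_u(G')f(G')² ≤ 2^{−6}·Σ_{G' ∉ R} π_u(G')f(G')². -/
open Finset

open scoped Classical in
/-- The uniform probability measure `π_u` on the set `Ω^B_n(d)` of simple `d`-regular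
bipartite graphs, viewed as a weight function. -/
noncomputable def piU (n d : ℕ) (A : Fin n → Fin n → ℕ) : ℝ :=
  if IsReg n d A ∧ IsSimpleG A then
    (1 : ℝ) / (({B | IsReg n d B ∧ IsSimpleG B} : Set (Fin n → Fin n → ℕ)).ncard : ℝ)
  else 0

/-- The variance `Var_{π_u}(f) = (1/2) Σ_{x,y} π_u(x) π_u(y) (f(x) − f(y))²`. -/
noncomputable def VarU (n d : ℕ) (f : (Fin n → Fin n → ℕ) → ℝ) : ℝ :=
  (1 / 2) * ∑ᶠ A, ∑ᶠ B, piU n d A * piU n d B * (f A - f B) ^ 2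

section Helpers

lemma finsum_mem_to_filter {α : Type*} (T : Finset α) (s : Set α) [DecidablePred (· ∈ s)]
    (h : α → ℝ) (hs : Function.support h ⊆ ↑T) :
    ∑ᶠ A ∈ s, h A = ∑ x ∈ T.filter (· ∈ s), h x := by
  have hsub : Function.support (Set.indicator s h) ⊆ ↑T := by
    rw [Set.support_indicator]; exact Set.inter_subset_right.trans hs
  rw [finsum_mem_def, finsum_eq_finset_sum_of_support_subset _ hsub,
    Finset.sum_indicator_eq_sum_filter]

lemma key_lemma {Ω : Type*} (T : Finset Ω) (μ g : Ω → ℝ) (R : Set Ω) [DecidablePred (· ∈ R)]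
    (hμ : ∀ x, 0 ≤ μ x) (htot : ∑ x ∈ T, μ x = 1)
    (hmean : ∑ x ∈ T, μ x * g x = 0)
    (hR : (1:ℝ) - 1/2^9 ≤ ∑ x ∈ T.filter (· ∈ R), μ x)
    (hvar : ∑ x ∈ T.filter (· ∈ R), ∑ y ∈ T.filter (· ∈ R), μ x * μ y * (g x - g y)^2 <
      (1/2^7) * ((1/2) * ∑ x ∈ T, ∑ y ∈ T, μ x * μ y * (g x - g y)^2)) :
    ∑ x ∈ T.filter (· ∈ R), μ x * g x ^ 2 ≤
      (1/2^6) * ∑ x ∈ T.filter (· ∉ R), μ x * g x ^ 2 := by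
  classical
  have expand : ∀ s : Finset Ω, ∑ x ∈ s, ∑ y ∈ s, μ x * μ y * (g x - g y)^2
      = 2 * ((∑ x ∈ s, μ x) * (∑ x ∈ s, μ x * g x ^ 2)) - 2 * (∑ x ∈ s, μ x * g x)^2 := by
    intro s
    have h1 : ∀ x y, μ x * μ y * (g x - g y)^2
        = μ x * (μ y * g y ^ 2) + (μ x * g x ^ 2) * μ y - (μ x * g x) * (2 * (μ y * g y)) := by
      intro x y; ring
    simp only [h1, Finset.sum_add_distrib, Finset.sum_sub_distrib, ← Finset.mul_sum,
      ← Finset.sum_mul]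
    ring
  have hcs : ∀ s : Finset Ω, (∑ x ∈ s, μ x * g x)^2 ≤ (∑ x ∈ s, μ x) * (∑ x ∈ s, μ x * g x ^ 2) := by
    intro s
    have := Finset.sum_mul_sq_le_sq_mul_sq s (fun x => Real.sqrt (μ x))
      (fun x => Real.sqrt (μ x) * g x)
    simp only [← mul_assoc, Real.mul_self_sqrt (hμ _), Real.sq_sqrt (hμ _), mul_pow,
      Real.sq_sqrt (hμ _)] at this
    calc (∑ x ∈ s, μ x * g x)^2 = (∑ x ∈ s, Real.sqrt (μ x) * (Real.sqrt (μ x) * g x))^2 := by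
          congr 1; apply Finset.sum_congr rfl; intro x _
          rw [← mul_assoc, Real.mul_self_sqrt (hμ _)]
      _ ≤ (∑ x ∈ s, Real.sqrt (μ x) ^ 2) * ∑ x ∈ s, (Real.sqrt (μ x) * g x) ^ 2 :=
          Finset.sum_mul_sq_le_sq_mul_sq s _ _
      _ = (∑ x ∈ s, μ x) * (∑ x ∈ s, μ x * g x ^ 2) := by
          congr 1 <;> (apply Finset.sum_congr rfl; intro x _)
          · exact Real.sq_sqrt (hμ _)
          · rw [mul_pow, Real.sq_sqrt (hμ _)]
  rw [expand, expand, htot, hmean] at hvar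
  set TR := T.filter (· ∈ R) with hTR
  set TC := T.filter (· ∉ R) with hTC
  set a := ∑ x ∈ TR, μ x * g x ^ 2 with ha
  set b := ∑ x ∈ TC, μ x * g x ^ 2 with hb
  set p := ∑ x ∈ TR, μ x with hp
  set q := ∑ x ∈ TC, μ x with hq
  set m := ∑ x ∈ TR, μ x * g x with hm
  set mc := ∑ x ∈ TC, μ x * g x with hmc
  have hsplit : ∀ h : Ω → ℝ, ∑ x ∈ TR, h x + ∑ x ∈ TC, h x = ∑ x ∈ T, h x := fun h =>
    Finset.sum_filter_add_sum_filter_not T _ h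
  have hpq : p + q = 1 := by rw [hp, hq, hsplit]; exact htot
  have hmm : m + mc = 0 := by rw [hm, hmc, hsplit]; exact hmean
  have hab : a + b = ∑ x ∈ T, μ x * g x ^ 2 := by rw [ha, hb, hsplit]
  have ha0 : 0 ≤ a := Finset.sum_nonneg fun x _ => mul_nonneg (hμ x) (sq_nonneg _)
  have hb0 : 0 ≤ b := Finset.sum_nonneg fun x _ => mul_nonneg (hμ x) (sq_nonneg _)
  have hq0 : 0 ≤ q := Finset.sum_nonneg fun x _ => hμ x
  have hcsC : mc^2 ≤ q * b := hcs TC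
  rw [← hab] at hvar
  have hvar' : 2 * (p * a) - 2 * m^2 < (1/2^7) * ((1/2) * (2 * (1 * (a + b)) - 2 * 0^2)) := hvar
  have hm2 : m^2 = mc^2 := by
    have : m = -mc := by linarith
    rw [this]; ring
  have hq' : q ≤ 1/2^9 := by linarith
  nlinarith [mul_nonneg ha0 (by linarith : (0:ℝ) ≤ p - (1 - 1/2^9)), mul_nonneg hq0 hb0,
    mul_nonneg (by linarith : (0:ℝ) ≤ (1:ℝ)/2^9 - q) hb0]

lemma finsum_mem_zero' {α : Type*} (s : Set α) : ∑ᶠ i ∈ s, (0:ℝ) = 0 := by simp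

lemma double_finsum_mem_to_sum {α : Type*} (T : Finset α) (μ : α → ℝ)
    (hsupp : Function.support μ ⊆ ↑T) (R : Set α) [DecidablePred (· ∈ R)]
    (F : α → α → ℝ) (h0a : ∀ a b, μ a = 0 → F a b = 0) (h0b : ∀ a b, μ b = 0 → F a b = 0) :
    ∑ᶠ A ∈ R, ∑ᶠ B ∈ R, F A B
      = ∑ x ∈ T.filter (· ∈ R), ∑ y ∈ T.filter (· ∈ R), F x y := by
  have hsub : ∀ h : α → ℝ, (∀ x, μ x = 0 → h x = 0) → Function.support h ⊆ ↑T := by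
    intro h hh x hx
    exact hsupp fun hc => hx (hh x hc)
  have inner : ∀ a, ∑ᶠ B ∈ R, F a B = ∑ y ∈ T.filter (· ∈ R), F a y := fun a =>
    finsum_mem_to_filter T R (F a) (hsub _ (fun x hx => h0b a x hx))
  have outer : Function.support (fun a => ∑ᶠ B ∈ R, F a B) ⊆ ↑T := by
    apply hsub
    intro x hx
    have : F x = fun _ => (0:ℝ) := funext fun b => h0a x b hx
    rw [show (∑ᶠ B ∈ R, F x B) = ∑ᶠ B ∈ R, (0:ℝ) by rw [this]]
    exact finsum_mem_zero' R
  rw [finsum_mem_to_filter T R _ outer]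
  exact Finset.sum_congr rfl fun x _ => inner x

lemma double_finsum_to_sum {α : Type*} (T : Finset α) (μ : α → ℝ)
    (hsupp : Function.support μ ⊆ ↑T)
    (F : α → α → ℝ) (h0a : ∀ a b, μ a = 0 → F a b = 0) (h0b : ∀ a b, μ b = 0 → F a b = 0) :
    ∑ᶠ A, ∑ᶠ B, F A B = ∑ x ∈ T, ∑ y ∈ T, F x y := by
  have hsub : ∀ h : α → ℝ, (∀ x, μ x = 0 → h x = 0) → Function.support h ⊆ ↑T := by
    intro h hh x hx
    exact hsupp fun hc => hx (hh x hc)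
  have inner : ∀ a, ∑ᶠ B, F a B = ∑ y ∈ T, F a y := fun a =>
    finsum_eq_finset_sum_of_support_subset (F a) (hsub _ (fun x hx => h0b a x hx))
  have outer : Function.support (fun a => ∑ᶠ B, F a B) ⊆ ↑T := by
    apply hsub
    intro x hx
    have : F x = fun _ => (0:ℝ) := funext fun b => h0a x b hx
    rw [this]; exact finsum_zero
  rw [finsum_eq_finset_sum_of_support_subset _ outer]
  exact Finset.sum_congr rfl fun x _ => inner x

end Helpers

/-- If `f` has zero `π_u`-mean, `π_u(R) ≥ 1 − 2⁻⁹`, and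
`Σ_{G',G''∈R} π_u(G')π_u(G'')(f(G')−f(G''))² < 2⁻⁷ Var_{π_u}(f)`, then
`Σ_{G'∈R} π_u(G') f(G')² ≤ 2⁻⁶ Σ_{G'∉R} π_u(G') f(G')²`. -/

theorem stmt17 (n d : ℕ) (R : Set (Fin n → Fin n → ℕ))
    (f : (Fin n → Fin n → ℕ) → ℝ)
    (hmean : ∑ᶠ A, piU n d A * f A = 0)
    (hR : (1 : ℝ) - 1 / 2 ^ 9 ≤ ∑ᶠ A ∈ R, piU n d A)
    (hvar : ∑ᶠ A ∈ R, ∑ᶠ B ∈ R, piU n d A * piU n d B * (f A - f B) ^ 2 <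
      (1 / 2 ^ 7) * VarU n d f) :
    ∑ᶠ A ∈ R, piU n d A * f A ^ 2 ≤
      (1 / 2 ^ 6) * ∑ᶠ A ∈ Rᶜ, piU n d A * f A ^ 2 := by
  classical
  set S : Set (Fin n → Fin n → ℕ) := {B | IsReg n d B ∧ IsSimpleG B} with hSdef
  have hSfin : S.Finite := by
    apply Set.Finite.subset
      (Set.Finite.pi (fun _ : Fin n => Set.Finite.pi fun _ : Fin n => Set.finite_Iic d))
    intro A hA
    simp only [Set.mem_pi, Set.mem_univ, Set.mem_Iic, forall_true_left]
    intro i j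
    exact le_trans (Finset.single_le_sum (fun k _ => Nat.zero_le (A i k)) (Finset.mem_univ j))
      (le_of_eq (hA.1.1 i))
  set T := hSfin.toFinset with hTdef
  have hsuppμ : Function.support (piU n d) ⊆ ↑T := by
    intro A hA
    rw [Finset.mem_coe, hTdef, Set.Finite.mem_toFinset]
    simp only [Function.mem_support, piU] at hA
    by_contra hc
    rw [if_neg (fun h : IsReg n d A ∧ IsSimpleG A => hc h)] at hA
    exact hA rfl
  have hcard : S.ncard = T.card := Set.ncard_eq_toFinset_card S hSfin
  have hμval : ∀ A ∈ T, piU n d A = 1 / (T.card : ℝ) := by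
    intro A hA
    have hAS : IsReg n d A ∧ IsSimpleG A := (Set.Finite.mem_toFinset hSfin).mp hA
    rw [show piU n d A = _ from if_pos hAS, ← hSdef, hcard]
  have hsub : ∀ h : (Fin n → Fin n → ℕ) → ℝ, (∀ x, piU n d x = 0 → h x = 0) →
      Function.support h ⊆ ↑T := fun h hh x hx => hsuppμ fun hc => hx (hh x hc)
  -- rewrite hypotheses as finite sums
  rw [finsum_eq_finset_sum_of_support_subset _
    (hsub _ fun x hx => by rw [hx, zero_mul])] at hmean
  rw [finsum_mem_to_filter T R _ hsuppμ] at hR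
  rw [double_finsum_mem_to_sum T (piU n d) hsuppμ R _
      (fun a b h => by rw [h]; ring) (fun a b h => by rw [h]; ring),
    VarU,
    double_finsum_to_sum T (piU n d) hsuppμ _
      (fun a b h => by rw [h]; ring) (fun a b h => by rw [h]; ring)] at hvar
  rw [finsum_mem_to_filter T R _
    (hsub _ fun x hx => by rw [hx, zero_mul])]
  rw [finsum_mem_to_filter T Rᶜ _
    (hsub _ fun x hx => by rw [hx, zero_mul])]
  have hTn : T.Nonempty := by
    rcases Finset.eq_empty_or_nonempty T with h | h
    · rw [h] at hR
      simp only [Finset.filter_empty, Finset.sum_empty] at hR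
      norm_num at hR
    · exact h
  have htot : ∑ x ∈ T, piU n d x = 1 := by
    rw [Finset.sum_congr rfl hμval, Finset.sum_const, nsmul_eq_mul]
    field_simp [Finset.card_ne_zero_of_mem hTn.choose_spec]
  have hμ0 : ∀ x, 0 ≤ piU n d x := by
    intro x
    rw [piU]
    split_ifs
    · positivity
    · exact le_refl 0
  have key := key_lemma T (piU n d) f R hμ0 htot hmean hR hvar
  calc ∑ x ∈ T.filter (· ∈ R), piU n d x * f x ^ 2
      ≤ (1/2^6) * ∑ x ∈ T.filter (· ∉ R), piU n d x * f x ^ 2 := key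
    _ = (1/2^6) * ∑ x ∈ T.filter (· ∈ Rᶜ), piU n d x * f x ^ 2 := by
        have he : T.filter (· ∉ R) = T.filter (· ∈ Rᶜ) :=
          Finset.filter_congr fun x _ => by simp [Set.mem_compl_iff]
        rw [he]
end

section
/- Let G₁,G₂ be distinct multigraphs in Cat_{n,d}([1,𝔪]) and let f̃ be the randomized extension of f. Then (f̃(G₁)−f̃(G₂))² ≥ (η_{G₁,G₂} / (3|SN(G₁)||SN(G₂)|)) · Σ_{G'∈SN(G₁), G''∈SN(G₂)} (f(G')−f(G''))², where η_{G₁,G₂} is the indicator that ξ_{G₁}(h(G₁)−h(G₂)) ≥ 0, −ξ_{G₂}(h(G₁)−h(G₂)) ≥ 0, ξ_{G₁} and ξ_{G₂} have opposite signs, and |ξ_{G₁}|, |ξ_{G₂}| ≥ 1. -/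
open Finset

/-- `h(G)`: the average of `f` over the `s`-neighborhood of `G`. -/
noncomputable def havg {n : ℕ} (f : (Fin n → Fin n → ℕ) → ℝ) (A : Fin n → Fin n → ℕ) : ℝ :=
  (1 / ((SN A).ncard : ℝ)) * ∑ᶠ G ∈ SN A, f G

/-- `w(G)`: the empirical variance of `f` over the `s`-neighborhood of `G`. -/
noncomputable def wvar {n : ℕ} (f : (Fin n → Fin n → ℕ) → ℝ) (A : Fin n → Fin n → ℕ) : ℝ :=
  (1 / ((SN A).ncard : ℝ)) * ∑ᶠ G ∈ SN A, (f G - havg f A) ^ 2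

/-- The `s`-neighborhood is finite. -/
lemma SN_finite {n : ℕ} (A : Fin n → Fin n → ℕ) : (SN A).Finite := by
  apply (Set.finite_range (endpointM A)).subset
  rintro B ⟨g, -, rfl⟩
  exact ⟨g, rfl⟩

/-- Key scalar inequality. -/
lemma key_ineq (a w₁ w₂ ξ₁ ξ₂ : ℝ) (hw₁ : 0 ≤ w₁) (hw₂ : 0 ≤ w₂)
    (h₁ : 0 ≤ ξ₁ * a) (h₂ : 0 ≤ -ξ₂ * a) (h₃ : ξ₁ * ξ₂ < 0)
    (h₄ : 1 ≤ |ξ₁|) (h₅ : 1 ≤ |ξ₂|) :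
    a ^ 2 + w₁ + w₂ ≤ (a + ξ₁ * Real.sqrt w₁ - ξ₂ * Real.sqrt w₂) ^ 2 := by
  set t₁ := Real.sqrt w₁ with ht₁
  set t₂ := Real.sqrt w₂ with ht₂
  have ht₁n : 0 ≤ t₁ := Real.sqrt_nonneg _
  have ht₂n : 0 ≤ t₂ := Real.sqrt_nonneg _
  have hs₁ : t₁ ^ 2 = w₁ := Real.sq_sqrt hw₁
  have hs₂ : t₂ ^ 2 = w₂ := Real.sq_sqrt hw₂
  have hξ₁ : 1 ≤ ξ₁ ^ 2 := by nlinarith [sq_abs ξ₁]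
  have hξ₂ : 1 ≤ ξ₂ ^ 2 := by nlinarith [sq_abs ξ₂]
  nlinarith [mul_nonneg (sub_nonneg.mpr hξ₁) (sq_nonneg t₁),
    mul_nonneg (sub_nonneg.mpr hξ₂) (sq_nonneg t₂),
    mul_nonneg h₁ ht₁n, mul_nonneg h₂ ht₂n,
    mul_nonneg (mul_nonneg (le_of_lt (neg_pos.mpr h₃)) ht₁n) ht₂n]


lemma main_aux {α : Type*} (s₁ s₂ : Finset α) (hc₁ : 0 < s₁.card) (hc₂ : 0 < s₂.card)
    (f : α → ℝ) (h₁ h₂ w₁ w₂ ξ₁ ξ₂ : ℝ)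
    (hw₁ : w₁ = (1 / (s₁.card : ℝ)) * ∑ G ∈ s₁, (f G - h₁) ^ 2)
    (hw₂ : w₂ = (1 / (s₂.card : ℝ)) * ∑ G ∈ s₂, (f G - h₂) ^ 2)
    (hη₁ : 0 ≤ ξ₁ * (h₁ - h₂)) (hη₂ : 0 ≤ -ξ₂ * (h₁ - h₂)) (hη₃ : ξ₁ * ξ₂ < 0)
    (hη₄ : 1 ≤ |ξ₁|) (hη₅ : 1 ≤ |ξ₂|) :
    (1 / (3 * (s₁.card : ℝ) * (s₂.card : ℝ))) *
        ∑ G' ∈ s₁, ∑ G'' ∈ s₂, (f G' - f G'') ^ 2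
      ≤ ((h₁ + ξ₁ * Real.sqrt w₁) - (h₂ + ξ₂ * Real.sqrt w₂)) ^ 2 := by
  set N₁ : ℝ := (s₁.card : ℝ) with hN₁def
  set N₂ : ℝ := (s₂.card : ℝ) with hN₂def
  have hN₁pos : 0 < N₁ := by rw [hN₁def]; exact_mod_cast hc₁
  have hN₂pos : 0 < N₂ := by rw [hN₂def]; exact_mod_cast hc₂
  set V₁ : ℝ := ∑ G ∈ s₁, (f G - h₁) ^ 2 with hV₁def
  set V₂ : ℝ := ∑ G ∈ s₂, (f G - h₂) ^ 2 with hV₂def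
  have hV₁n : 0 ≤ V₁ := Finset.sum_nonneg fun _ _ => sq_nonneg _
  have hV₂n : 0 ≤ V₂ := Finset.sum_nonneg fun _ _ => sq_nonneg _
  have hw₁n : 0 ≤ w₁ := by
    rw [hw₁]; exact mul_nonneg (one_div_nonneg.mpr hN₁pos.le) hV₁n
  have hw₂n : 0 ≤ w₂ := by
    rw [hw₂]; exact mul_nonneg (one_div_nonneg.mpr hN₂pos.le) hV₂n
  have hsum : ∑ G' ∈ s₁, ∑ G'' ∈ s₂, (f G' - f G'') ^ 2
      ≤ 3 * (N₂ * V₁ + N₁ * N₂ * (h₁ - h₂) ^ 2 + N₁ * V₂) := by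
    have hle : ∑ G' ∈ s₁, ∑ G'' ∈ s₂, (f G' - f G'') ^ 2
        ≤ ∑ G' ∈ s₁, ∑ G'' ∈ s₂,
          (3 * ((f G' - h₁) ^ 2 + (h₁ - h₂) ^ 2 + (f G'' - h₂) ^ 2)) := by
      refine Finset.sum_le_sum fun G' _ => Finset.sum_le_sum fun G'' _ => ?_
      nlinarith [sq_nonneg ((f G' - h₁) - (h₁ - h₂)), sq_nonneg ((f G' - h₁) + (f G'' - h₂)),
        sq_nonneg ((h₁ - h₂) + (f G'' - h₂))]
    refine hle.trans_eq ?_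
    rw [show (∑ G' ∈ s₁, ∑ G'' ∈ s₂, 3 * ((f G' - h₁) ^ 2 + (h₁ - h₂) ^ 2 + (f G'' - h₂) ^ 2))
        = ∑ G' ∈ s₁, (3 * (N₂ * (f G' - h₁) ^ 2 + N₂ * (h₁ - h₂) ^ 2 + V₂)) from
      Finset.sum_congr rfl fun G' _ => by
        simp only [Finset.mul_sum, Finset.sum_add_distrib, Finset.sum_const, nsmul_eq_mul,
          ← Finset.mul_sum, ← hV₂def, ← hN₂def]
        try ring]
    simp only [Finset.mul_sum, Finset.sum_add_distrib, Finset.sum_const, nsmul_eq_mul,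
      ← Finset.mul_sum, ← hV₁def, ← hN₁def]
    ring
  have hmid : (1 / (3 * N₁ * N₂)) * ∑ G' ∈ s₁, ∑ G'' ∈ s₂, (f G' - f G'') ^ 2
      ≤ (h₁ - h₂) ^ 2 + w₁ + w₂ := by
    rw [hw₁, hw₂, div_mul_eq_mul_div, one_mul,
      div_le_iff₀ (mul_pos (mul_pos (by norm_num : (0:ℝ) < 3) hN₁pos) hN₂pos)]
    calc ∑ G' ∈ s₁, ∑ G'' ∈ s₂, (f G' - f G'') ^ 2
        ≤ 3 * (N₂ * V₁ + N₁ * N₂ * (h₁ - h₂) ^ 2 + N₁ * V₂) := hsum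
      _ = ((h₁ - h₂) ^ 2 + 1 / N₁ * V₁ + 1 / N₂ * V₂) * (3 * N₁ * N₂) := by
          field_simp; ring
  refine hmid.trans ?_
  calc (h₁ - h₂) ^ 2 + w₁ + w₂
      ≤ ((h₁ - h₂) + ξ₁ * Real.sqrt w₁ - ξ₂ * Real.sqrt w₂) ^ 2 :=
        key_ineq (h₁ - h₂) w₁ w₂ ξ₁ ξ₂ hw₁n hw₂n hη₁ hη₂ hη₃ hη₄ hη₅
    _ = ((h₁ + ξ₁ * Real.sqrt w₁) - (h₂ + ξ₂ * Real.sqrt w₂)) ^ 2 := by ring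

theorem stmt18 (n d k₁ k₂ : ℕ)
    (hk₁ : 1 ≤ k₁) (hm₁ : k₁ ≤ d ^ 2 * ⌊Real.log (n : ℝ)⌋₊)
    (hk₂ : 1 ≤ k₂) (hm₂ : k₂ ≤ d ^ 2 * ⌊Real.log (n : ℝ)⌋₊)
    (A₁ A₂ : Fin n → Fin n → ℕ) (hne : A₁ ≠ A₂)
    (hc₁ : InCat n d k₁ A₁) (hc₂ : InCat n d k₂ A₂)
    (f : (Fin n → Fin n → ℕ) → ℝ) (ξ₁ ξ₂ : ℝ)
    (hη₁ : 0 ≤ ξ₁ * (havg f A₁ - havg f A₂))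
    (hη₂ : 0 ≤ -ξ₂ * (havg f A₁ - havg f A₂))
    (hη₃ : ξ₁ * ξ₂ < 0)
    (hη₄ : 1 ≤ |ξ₁|) (hη₅ : 1 ≤ |ξ₂|) :
    (1 / (3 * ((SN A₁).ncard : ℝ) * ((SN A₂).ncard : ℝ))) *
        ∑ᶠ G' ∈ SN A₁, ∑ᶠ G'' ∈ SN A₂, (f G' - f G'') ^ 2 ≤
      ((havg f A₁ + ξ₁ * Real.sqrt (wvar f A₁)) -
        (havg f A₂ + ξ₂ * Real.sqrt (wvar f A₂))) ^ 2 := by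
  have hfin₁ := SN_finite A₁
  have hfin₂ := SN_finite A₂
  rcases Set.eq_empty_or_nonempty (SN A₁) with he₁ | hne₁
  · simp only [he₁, finsum_mem_empty, mul_zero]
    exact sq_nonneg _
  rcases Set.eq_empty_or_nonempty (SN A₂) with he₂ | hne₂
  · simp only [he₂, finsum_mem_empty, finsum_zero, mul_zero]
    exact sq_nonneg _
  have hc₁' : 0 < hfin₁.toFinset.card := Finset.card_pos.mpr (by
    obtain ⟨x, hx⟩ := hne₁; exact ⟨x, hfin₁.mem_toFinset.mpr hx⟩)
  have hc₂' : 0 < hfin₂.toFinset.card := Finset.card_pos.mpr (by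
    obtain ⟨x, hx⟩ := hne₂; exact ⟨x, hfin₂.mem_toFinset.mpr hx⟩)
  have hn₁ : ((SN A₁).ncard : ℝ) = (hfin₁.toFinset.card : ℝ) := by
    rw [Set.ncard_eq_toFinset_card _ hfin₁]
  have hn₂ : ((SN A₂).ncard : ℝ) = (hfin₂.toFinset.card : ℝ) := by
    rw [Set.ncard_eq_toFinset_card _ hfin₂]
  have hw₁ : wvar f A₁ = (1 / (hfin₁.toFinset.card : ℝ)) *
      ∑ G ∈ hfin₁.toFinset, (f G - havg f A₁) ^ 2 := by
    rw [wvar, finsum_mem_eq_finite_toFinset_sum _ hfin₁, hn₁]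
  have hw₂ : wvar f A₂ = (1 / (hfin₂.toFinset.card : ℝ)) *
      ∑ G ∈ hfin₂.toFinset, (f G - havg f A₂) ^ 2 := by
    rw [wvar, finsum_mem_eq_finite_toFinset_sum _ hfin₂, hn₂]
  have hfs : ∑ᶠ G' ∈ SN A₁, ∑ᶠ G'' ∈ SN A₂, (f G' - f G'') ^ 2
      = ∑ G' ∈ hfin₁.toFinset, ∑ G'' ∈ hfin₂.toFinset, (f G' - f G'') ^ 2 := by
    rw [finsum_mem_eq_finite_toFinset_sum _ hfin₁]
    exact Finset.sum_congr rfl fun G' _ => finsum_mem_eq_finite_toFinset_sum _ hfin₂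
  rw [hfs, hn₁, hn₂]
  exact main_aux hfin₁.toFinset hfin₂.toFinset hc₁' hc₂' f (havg f A₁) (havg f A₂)
    (wvar f A₁) (wvar f A₂) ξ₁ ξ₂ hw₁ hw₂ hη₁ hη₂ hη₃ hη₄ hη₅
end
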